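/- arXiv:2108.02291 — 2 statements merged into one kernel-verified Lean document; each statement's English description precedes it below -/
import Mathlib

section
/- Let $X$ be a Banach space and $\alpha>0$. A strongly measurable function $f:[t_0,t_1]\to X$ satisfies $f\in L^1(t_0,b;X)$ for every $b\in(t_0,t_1)$ if and only if the Riemann-Liouville fractional integral $J^\alpha_{t_0,t}f(t)$ exists for almost every $t\in[t_0,t_1]$. -/
open MeasureTheory Real Set

/-- The Riemann-Liouville fractional integral of order `α` based at `t₀`. -/
noncomputable def RL {X : Type*} [NormedAddCommGroup X] [NormedSpace ℝ X]
    (α t₀ : ℝ) (f : ℝ → X) (t : ℝ) : X :=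
  (Real.Gamma α)⁻¹ • ∫ s in t₀..t, (t - s) ^ (α - 1) • f s

/-!
For `f ∈ L¹(a, b)`, the map `(t, s) ↦ (t - s) ^ (α - 1) f(s)` is, up to truncating the kernel to
`[0, b - a]` where `u ^ (α - 1)` is integrable because `α > 0`, the integrand of the convolution of
two `L¹` functions; by Tonelli it is integrable on the product, hence integrable in `s` for almost
every `t`. Exhausting `(t₀, t₁)` by countably many intervals `(t₀, b]` gives the forward direction.
Conversely, given `b < t₁`, the set `(b, t₁)` has positive measure, so it contains a `t` at which
the fractional integral exists; on `[t₀, b]` the weight `(t - s) ^ (1 - α)` is continuous, and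
multiplying by it recovers `f`.
-/

theorem ae_restrict_Ioo_of_forall_ae_restrict_Ioc {β : Type*} [LinearOrder β] [TopologicalSpace β]
    [DenselyOrdered β] [OrderTopology β] [FirstCountableTopology β] [MeasurableSpace β]
    {μ : Measure β} {p : β → Prop} {a c : β} (hac : a < c)
    (h : ∀ b ∈ Ioo a c, ∀ᵐ t ∂μ.restrict (Ioc a b), p t) :
    ∀ᵐ t ∂μ.restrict (Ioo a c), p t := by
  obtain ⟨u, -, hu_mem, hu_lim⟩ := exists_seq_strictMono_tendsto' hac
  have hcover : Ioo a c ⊆ ⋃ n, Ioc a (u n) := fun t ht ↦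
    have ⟨n, hn⟩ := (hu_lim.eventually (lt_mem_nhds ht.2)).exists
    mem_iUnion.2 ⟨n, ht.1, hn.le⟩
  exact ae_restrict_of_ae_restrict_of_subset hcover
    ((ae_restrict_iUnion_iff _ _).2 fun n ↦ h (u n) (hu_mem n))

section RiemannLiouville

variable {X : Type*} [NormedAddCommGroup X] [NormedSpace ℝ X]

theorem ae_intervalIntegrable_rpow_smul {f : ℝ → X} {α a b : ℝ} (hα : 0 < α)
    (hf : IntegrableOn f (Ioc a b)) :
    ∀ᵐ t ∂volume.restrict (Ioc a b),
      IntervalIntegrable (fun s ↦ (t - s) ^ (α - 1) • f s) volume a t := by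
  set k : ℝ → ℝ := (Icc 0 (b - a)).indicator (· ^ (α - 1))
  have hk : Integrable k := by
    refine (integrable_indicator_iff measurableSet_Icc).2 ?_
    rw [integrableOn_Icc_iff_integrableOn_Ioc]
    exact (intervalIntegral.intervalIntegrable_rpow' (by linarith)).def'.mono_set Ioc_subset_uIoc
  have hconv := ((integrable_indicator_iff measurableSet_Ioc).2 hf).ae_convolution_exists
    (ContinuousLinearMap.lsmul ℝ ℝ : ℝ →L[ℝ] X →L[ℝ] X).flip hk
  filter_upwards [ae_restrict_of_ae hconv, ae_restrict_mem measurableSet_Ioc] with t ht htab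
  rw [intervalIntegrable_iff_integrableOn_Ioc_of_le htab.1.le]
  refine ht.integrableOn.congr_fun (fun s hs ↦ ?_) measurableSet_Ioc
  have hst : t - s ∈ Icc 0 (b - a) := ⟨by linarith [hs.2], by linarith [hs.1, htab.2]⟩
  have hsab : s ∈ Ioc a b := ⟨hs.1, hs.2.trans htab.2⟩
  simp [k, indicator_of_mem hst, indicator_of_mem hsab]

theorem integrableOn_Icc_of_intervalIntegrable_rpow_smul {f : ℝ → X} {α a b t : ℝ} (hbt : b < t)
    (h : IntervalIntegrable (fun s ↦ (t - s) ^ (α - 1) • f s) volume a t) :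
    IntegrableOn f (Icc a b) := by
  rw [integrableOn_Icc_iff_integrableOn_Ioc]
  have hpos : ∀ s ∈ Icc a b, 0 < t - s := fun s hs ↦ by linarith [hs.2]
  have hcont : ContinuousOn (fun s ↦ (t - s) ^ (1 - α)) (Icc a b) :=
    (continuousOn_const.sub continuousOn_id).rpow_const fun s hs ↦ Or.inl (hpos s hs).ne'
  have hg : IntegrableOn (fun s ↦ (t - s) ^ (α - 1) • f s) (Ioc a b) :=
    h.def'.mono_set ((Ioc_subset_Ioc_right hbt.le).trans Ioc_subset_uIoc)
  refine (hg.continuousOn_smul_of_subset hcont isCompact_Icc measurableSet_Ioc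
    Ioc_subset_Icc_self).congr_fun (fun s hs ↦ ?_) measurableSet_Ioc
  dsimp only
  rw [smul_smul, ← rpow_add (hpos s (Ioc_subset_Icc_self hs))]
  simp

end RiemannLiouville

theorem rl_exists_iff_locally_integrable_general {X : Type*} [NormedAddCommGroup X] [NormedSpace ℝ X]
    (t₀ t₁ α : ℝ) (ht : t₀ < t₁) (hα : 0 < α) (f : ℝ → X) :
    (∀ b ∈ Set.Ioo t₀ t₁, IntegrableOn f (Set.Icc t₀ b) volume) ↔
    (∀ᵐ t ∂(volume.restrict (Set.Icc t₀ t₁)),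
        IntervalIntegrable (fun s => (t - s) ^ (α - 1) • f s) volume t₀ t) := by
  constructor
  · intro hf
    rw [← Measure.restrict_congr_set Ioo_ae_eq_Icc]
    exact ae_restrict_Ioo_of_forall_ae_restrict_Ioc ht fun b hb ↦
      ae_intervalIntegrable_rpow_smul hα ((hf b hb).mono_set Ioc_subset_Icc_self)
  · intro h b hb
    have : (ae (volume.restrict (Ioo b t₁))).NeBot := ae_restrict_neBot.2 (by simp [hb.2])
    obtain ⟨t, htb, ht_int⟩ := ((ae_restrict_mem measurableSet_Ioo).and
      (ae_restrict_of_ae_restrict_of_subset (Ioo_subset_Icc_self.trans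
        (Icc_subset_Icc_left hb.1.le)) h)).exists
    exact integrableOn_Icc_of_intervalIntegrable_rpow_smul htb.1 ht_int

/-- `f ∈ L¹(t₀,b;X)` for every `b ∈ (t₀,t₁)` iff the RL fractional integral of `f`
exists for almost every `t ∈ [t₀,t₁]`. -/
theorem rl_exists_iff_locally_integrable {X : Type*} [NormedAddCommGroup X] [NormedSpace ℝ X]
    [CompleteSpace X] (t₀ t₁ α : ℝ) (ht : t₀ < t₁) (hα : 0 < α) (f : ℝ → X)
    (hf : AEStronglyMeasurable f (volume.restrict (Set.Icc t₀ t₁))) :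
    (∀ b ∈ Set.Ioo t₀ t₁, IntegrableOn f (Set.Icc t₀ b) volume) ↔
    (∀ᵐ t ∂(volume.restrict (Set.Icc t₀ t₁)),
        IntervalIntegrable (fun s => (t - s) ^ (α - 1) • f s) volume t₀ t) :=
  rl_exists_iff_locally_integrable_general t₀ t₁ α ht hα f
end

section
/- Let $X$ be a nontrivial Banach space, $1\le p\le\infty$, and $\alpha>0$. Then the Riemann-Liouville fractional integral does not map $L^p(t_0,\infty;X)$ into itself: there exists $f\in L^p(t_0,\infty;X)$ such that $J^\alpha_{t_0,t}f\notin L^p(t_0,\infty;X)$. For $p=\infty$ one may take $f$ constant; for $1\le p<\infty$ one may take $f(s)=0$ for $t_0\le s\le t_0+1$ and $f(s)=(s-t_0)^{-(\alpha+1/p)}x$ for $s>t_0+1$, where $\|x\|_X=1$. -/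
/-!
For `p = ∞` take `f` constant: `J^α f (t) = (t - t₀)^α / Γ(α + 1) • f` is unbounded.
For `p < ∞` take `f(s) = (s - t₀)^r • x` for `s > t₀ + 1` (and `0` before), with
`r = -(α + 1/p)`, so that `r p < -1` and `f ∈ Lᵖ`. For large `t`, on the upper half
`[(t₀ + t)/2, t]` of the integration range `f ≥ (t - t₀)^r`, while the kernel `(t - s)^(α-1)`
integrates there to `((t - t₀)/2)^α / α`; hence `J^α f (t) ≳ (t - t₀)^(r + α) = (t - t₀)^(-1/p)`,
whose `p`-th power is `1/(t - t₀)`, not integrable at infinity.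
-/

open MeasureTheory Real Set
open scoped ENNReal

open Filter

lemma memLp_smul_const_iff {Ω 𝕜 E : Type*} [MeasurableSpace Ω] {μ : Measure Ω} {p : ℝ≥0∞}
    [NontriviallyNormedField 𝕜] [CompleteSpace 𝕜] [NormedAddCommGroup E] [NormedSpace 𝕜 E]
    {f : Ω → 𝕜} {c : E} (hc : c ≠ 0) :
    MemLp (fun ω => f ω • c) p μ ↔ MemLp f p μ := by
  refine ⟨fun h => h.of_le_mul (c := ‖c‖⁻¹) ((aestronglyMeasurable_smul_const_iff hc).1 h.1)
    (ae_of_all _ fun ω => ?_), fun h => h.of_le_mul (c := ‖c‖) (h.1.smul_const c)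
    (ae_of_all _ fun ω => by rw [norm_smul, mul_comm])⟩
  rw [norm_smul, inv_mul_eq_div, mul_div_cancel_right₀ _ (norm_ne_zero_iff.2 hc)]

lemma not_memLp_top_restrict_Ici_of_tendsto_norm {E : Type*} [NormedAddCommGroup E] {F : ℝ → E}
    (t₀ : ℝ) (hF : Tendsto (fun t => ‖F t‖) atTop atTop) :
    ¬ MemLp F ∞ (volume.restrict (Ici t₀)) := by
  intro h
  have h_ess := h.2
  rw [eLpNorm_exponent_top] at h_ess
  obtain ⟨C, hC⟩ := eLpNormEssSup_lt_top_iff_isBoundedUnder.1 h_ess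
  obtain ⟨b, hb⟩ := eventually_atTop.1 (tendsto_atTop.1 hF (C + 1))
  have : (ae (volume.restrict (Ici (max b t₀)))).NeBot := ae_neBot.2 (by simp)
  have hac : volume.restrict (Ici (max b t₀)) ≪ volume.restrict (Ici t₀) :=
    Measure.absolutelyContinuous_of_le
      (Measure.restrict_mono (Ici_subset_Ici.2 (le_max_right _ _)) le_rfl)
  obtain ⟨t, ht, hCt⟩ := ((ae_restrict_mem measurableSet_Ici).and (hac.ae_le hC)).exists
  have h_large := hb t (le_of_max_le_left ht)
  have h_small : ‖F t‖ ≤ C := hCt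
  linarith

lemma integrableOn_Ioi_sub_rpow_iff {t₀ a r : ℝ} (ha : t₀ < a) :
    IntegrableOn (fun s => (s - t₀) ^ r) (Ioi a) ↔ r < -1 := by
  have h_emb : MeasurableEmbedding (fun x : ℝ => x + t₀) :=
    (Homeomorph.addRight t₀).isClosedEmbedding.measurableEmbedding
  rw [IntegrableOn, ← map_add_right_eq_self volume t₀, ← IntegrableOn,
    MeasurableEmbedding.integrableOn_map_iff h_emb]
  have h_preimage : ((fun x : ℝ => x + t₀) ⁻¹' Ioi a) = Ioi (a - t₀) := by
    ext y; simp
  have h_comp : ((fun s : ℝ => (s - t₀) ^ r) ∘ (fun x : ℝ => x + t₀)) = fun x : ℝ => x ^ r := by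
    ext y; simp
  rw [h_preimage, h_comp, integrableOn_Ioi_rpow_iff (by linarith)]

lemma memLp_restrict_Ioi_sub_rpow_iff {t₀ a r : ℝ} {p : ℝ≥0∞} (ha : t₀ < a) (hp₀ : p ≠ 0)
    (hp : p ≠ ∞) :
    MemLp (fun s => (s - t₀) ^ r) p (volume.restrict (Ioi a)) ↔ r * p.toReal < -1 := by
  rw [← integrable_norm_rpow_iff
    (by fun_prop : Measurable fun s : ℝ => (s - t₀) ^ r).aestronglyMeasurable hp₀ hp, ← IntegrableOn,
    ← integrableOn_Ioi_sub_rpow_iff ha]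
  refine integrableOn_congr_fun (fun s hs => ?_) measurableSet_Ioi
  have hs : 0 ≤ s - t₀ := by linarith [mem_Ioi.1 hs]
  rw [norm_of_nonneg (rpow_nonneg hs _), ← rpow_mul hs]

lemma integral_sub_rpow {α : ℝ} (hα : 0 < α) (a t : ℝ) :
    ∫ s in a..t, (t - s) ^ (α - 1) = (t - a) ^ α / α := by
  rw [intervalIntegral.integral_comp_sub_left (fun u => u ^ (α - 1)) t, sub_self,
    integral_rpow (Or.inl (by linarith)), sub_add_cancel, zero_rpow hα.ne', sub_zero]

lemma intervalIntegrable_sub_rpow {α : ℝ} (hα : 0 < α) (a t : ℝ) :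
    IntervalIntegrable (fun s => (t - s) ^ (α - 1)) volume a t := by
  simpa using ((intervalIntegral.intervalIntegrable_rpow' (a := 0) (b := t - a)
    (by linarith : (-1 : ℝ) < α - 1)).comp_sub_left t).symm

lemma le_integral_sub_rpow_mul {g : ℝ → ℝ} {α a m t c : ℝ} (hα : 0 < α) (ham : a ≤ m)
    (hmt : m ≤ t) (hint : IntervalIntegrable (fun s => (t - s) ^ (α - 1) * g s) volume a t)
    (hg : ∀ s ∈ Icc a m, 0 ≤ g s) (hc : ∀ s ∈ Icc m t, c ≤ g s) :
    c * ((t - m) ^ α / α) ≤ ∫ s in a..t, (t - s) ^ (α - 1) * g s := by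
  have hm : m ∈ uIcc a t := mem_uIcc_of_le ham hmt
  have hint_am := hint.mono_set (uIcc_subset_uIcc left_mem_uIcc hm)
  have hint_mt := hint.mono_set (uIcc_subset_uIcc hm right_mem_uIcc)
  have h_left : 0 ≤ ∫ s in a..m, (t - s) ^ (α - 1) * g s :=
    intervalIntegral.integral_nonneg ham fun s hs =>
      mul_nonneg (rpow_nonneg (by linarith [hs.2]) _) (hg s hs)
  have h_right : c * ((t - m) ^ α / α) ≤ ∫ s in m..t, (t - s) ^ (α - 1) * g s := by
    rw [← integral_sub_rpow hα m t, ← intervalIntegral.integral_const_mul]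
    refine intervalIntegral.integral_mono_on hmt ((intervalIntegrable_sub_rpow hα m t).const_mul c)
      hint_mt fun s hs => ?_
    rw [mul_comm]
    exact mul_le_mul_of_nonneg_left (hc s hs) (rpow_nonneg (by linarith [hs.2]) _)
  rw [← intervalIntegral.integral_add_adjacent_intervals hint_am hint_mt]
  linarith

lemma RL_smul_const {X : Type*} [NormedAddCommGroup X] [NormedSpace ℝ X] [CompleteSpace X]
    (α t₀ : ℝ) (g : ℝ → ℝ) (x : X) :
    RL α t₀ (fun s => g s • x) = fun t => RL α t₀ g t • x := by
  ext t
  simp only [RL, smul_smul, smul_eq_mul]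
  rw [intervalIntegral.integral_smul_const, smul_smul]

lemma RL_const {X : Type*} [NormedAddCommGroup X] [NormedSpace ℝ X] [CompleteSpace X]
    {α : ℝ} (hα : 0 < α) (t₀ : ℝ) (x : X) (t : ℝ) :
    RL α t₀ (fun _ => x) t = ((t - t₀) ^ α / Gamma (α + 1)) • x := by
  rw [RL, intervalIntegral.integral_smul_const, integral_sub_rpow hα, smul_smul,
    Gamma_add_one hα.ne']
  congr 1
  field_simp

lemma not_memLp_top_RL_const {X : Type*} [NormedAddCommGroup X] [NormedSpace ℝ X]
    [CompleteSpace X] {α : ℝ} (hα : 0 < α) (t₀ : ℝ) {x : X} (hx : x ≠ 0) :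
    ¬ MemLp (RL α t₀ fun _ => x) ∞ (volume.restrict (Ici t₀)) := by
  refine not_memLp_top_restrict_Ici_of_tendsto_norm t₀ ?_
  have hΓ : 0 < Gamma (α + 1) := Gamma_pos_of_pos (by linarith)
  have h : Tendsto (fun t => (t - t₀) ^ α / Gamma (α + 1) * ‖x‖) atTop atTop :=
    (((tendsto_rpow_atTop hα).comp (tendsto_atTop_add_const_right _ (-t₀) tendsto_id)).atTop_div_const
      hΓ).atTop_mul_const (norm_pos_iff.2 hx)
  refine h.congr' ?_
  filter_upwards [eventually_ge_atTop t₀] with t ht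
  rw [RL_const hα, norm_smul, norm_of_nonneg (by have := sub_nonneg.2 ht; positivity)]

noncomputable def tailPower (t₀ r : ℝ) : ℝ → ℝ :=
  (Ioi (t₀ + 1)).indicator fun s => (s - t₀) ^ r

section tailPower

variable {t₀ r : ℝ}

lemma measurable_tailPower : Measurable (tailPower t₀ r) :=
  (by fun_prop : Measurable fun s : ℝ => (s - t₀) ^ r).indicator measurableSet_Ioi

lemma tailPower_nonneg (s : ℝ) : 0 ≤ tailPower t₀ r s :=
  indicator_nonneg (fun s hs => rpow_nonneg (by linarith [mem_Ioi.1 hs]) _) s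

lemma tailPower_le_one (hr : r ≤ 0) (s : ℝ) : tailPower t₀ r s ≤ 1 :=
  indicator_apply_le' (fun hs => rpow_le_one_of_one_le_of_nonpos (by linarith [mem_Ioi.1 hs]) hr)
    fun _ => zero_le_one

lemma rpow_le_tailPower (hr : r ≤ 0) {s t : ℝ} (hs : t₀ + 1 < s) (hst : s ≤ t) :
    (t - t₀) ^ r ≤ tailPower t₀ r s := by
  rw [tailPower, indicator_of_mem (show s ∈ Ioi (t₀ + 1) from hs)]
  exact rpow_le_rpow_of_nonpos (by linarith) (by linarith) hr

lemma memLp_tailPower {p : ℝ≥0∞} (hp₀ : p ≠ 0) (hp : p ≠ ∞) (hr : r * p.toReal < -1) :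
    MemLp (tailPower t₀ r) p volume := by
  rw [tailPower, memLp_indicator_iff_restrict measurableSet_Ioi]
  exact (memLp_restrict_Ioi_sub_rpow_iff (by linarith) hp₀ hp).2 hr

lemma le_RL_tailPower {α t : ℝ} (hα : 0 < α) (hr : r ≤ 0) (ht : t₀ + 2 < t) :
    (Gamma α * α * 2 ^ α)⁻¹ * (t - t₀) ^ (r + α) ≤ RL α t₀ (tailPower t₀ r) t := by
  have hu : 0 < t - t₀ := by linarith
  have hΓ : 0 < Gamma α := Gamma_pos_of_pos hα
  have hint : IntervalIntegrable (fun s => (t - s) ^ (α - 1) * tailPower t₀ r s) volume t₀ t := by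
    have h := intervalIntegrable_sub_rpow hα t₀ t
    rw [intervalIntegrable_iff] at h ⊢
    refine h.mul_bdd (c := 1) measurable_tailPower.aestronglyMeasurable (ae_of_all _ fun s => ?_)
    rw [norm_of_nonneg (tailPower_nonneg s)]
    exact tailPower_le_one hr s
  have key := le_integral_sub_rpow_mul (m := (t₀ + t) / 2) (c := (t - t₀) ^ r) hα
    (by linarith) (by linarith) hint (fun s _ => tailPower_nonneg s)
    (fun s hs => rpow_le_tailPower hr (by linarith [hs.1]) hs.2)
  calc (Gamma α * α * 2 ^ α)⁻¹ * (t - t₀) ^ (r + α)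
      = (Gamma α)⁻¹ * ((t - t₀) ^ r * ((t - (t₀ + t) / 2) ^ α / α)) := by
        rw [show t - (t₀ + t) / 2 = (t - t₀) / 2 by ring, div_rpow hu.le zero_le_two,
          rpow_add hu]
        field_simp
    _ ≤ (Gamma α)⁻¹ * ∫ s in t₀..t, (t - s) ^ (α - 1) * tailPower t₀ r s :=
        mul_le_mul_of_nonneg_left key (inv_nonneg.2 hΓ.le)
    _ = RL α t₀ (tailPower t₀ r) t := rfl

lemma not_memLp_RL_tailPower {α : ℝ} {p : ℝ≥0∞} (hα : 0 < α) (hp₀ : p ≠ 0) (hp : p ≠ ∞) :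
    ¬ MemLp (RL α t₀ (tailPower t₀ (-(α + p.toReal⁻¹)))) p (volume.restrict (Ici t₀)) := by
  have hq : 0 < p.toReal := ENNReal.toReal_pos hp₀ hp
  have hr : -(α + p.toReal⁻¹) ≤ 0 := by have := inv_pos.2 hq; linarith
  have hC : 0 < Gamma α * α * 2 ^ α := by have := Gamma_pos_of_pos hα; positivity
  intro h
  have h_tail : MemLp (fun t => (t - t₀) ^ (-(α + p.toReal⁻¹) + α)) p (volume.restrict (Ioi (t₀ + 2))) := by
    refine (h.mono_measure (Measure.restrict_mono (Ioi_subset_Ici (by linarith)) le_rfl)).of_le_mul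
      (c := Gamma α * α * 2 ^ α) (by fun_prop : Measurable _).aestronglyMeasurable ?_
    filter_upwards [ae_restrict_mem measurableSet_Ioi] with t ht
    rw [norm_of_nonneg (rpow_nonneg (by linarith [mem_Ioi.1 ht]) _), ← inv_mul_le_iff₀ hC]
    exact (le_RL_tailPower hα hr ht).trans (le_abs_self _)
  have h_exp : (-(α + p.toReal⁻¹) + α) * p.toReal = -1 := by
    rw [neg_add, neg_add_cancel_comm, neg_mul, inv_mul_cancel₀ hq.ne']
  linarith [(memLp_restrict_Ioi_sub_rpow_iff (by linarith) hp₀ hp).1 h_tail]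

end tailPower

/-- On the unbounded interval `[t₀,∞)`, the RL fractional integral does not map
`Lᵖ(t₀,∞;X)` into itself: there is `f ∈ Lᵖ(t₀,∞;X)` with `J^α f ∉ Lᵖ(t₀,∞;X)`. -/
theorem rl_not_welldefined_on_halfline {X : Type*} [NormedAddCommGroup X]
    [NormedSpace ℝ X] [CompleteSpace X] [Nontrivial X]
    (t₀ α : ℝ) (hα : 0 < α) (p : ℝ≥0∞) (hp : 1 ≤ p) :
    ∃ f : ℝ → X, MemLp f p (volume.restrict (Set.Ici t₀)) ∧
      ¬ MemLp (RL α t₀ f) p (volume.restrict (Set.Ici t₀)) := by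
  obtain ⟨x, hx⟩ := exists_ne (0 : X)
  rcases eq_or_ne p ∞ with rfl | hp_top
  · exact ⟨fun _ => x, memLp_top_const x, not_memLp_top_RL_const hα t₀ hx⟩
  have hp₀ : p ≠ 0 := (one_pos.trans_le hp).ne'
  have hq : 0 < p.toReal := ENNReal.toReal_pos hp₀ hp_top
  have hr : -(α + p.toReal⁻¹) * p.toReal < -1 := by
    rw [neg_mul, add_mul, inv_mul_cancel₀ hq.ne']
    nlinarith
  refine ⟨fun s => tailPower t₀ (-(α + p.toReal⁻¹)) s • x,
    (memLp_smul_const_iff hx).2 ((memLp_tailPower hp₀ hp_top hr).restrict _), ?_⟩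
  rw [RL_smul_const, memLp_smul_const_iff hx]
  exact not_memLp_RL_tailPower hα hp₀ hp_top
end
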